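/- There is a constant C such that for every bipartite graph G = (X,Y;E) with Δ(X) ≤ 4, one has χ'_int(G,X) ≤ C·(Δ(G))². -/

import Mathlib

/-- `X` is one part of a bipartition of `G`: every edge joins `X` and its complement. -/
def IsBipartition {V : Type*} (G : SimpleGraph V) (X : Set V) : Prop :=
  ∀ v w, G.Adj v w → (v ∈ X ↔ w ∉ X)

/-- A proper edge coloring: distinct edges sharing a vertex get distinct colors. -/
def IsProperEdgeColoring {V : Type*} (G : SimpleGraph V) (c : G.edgeSet → ℕ) : Prop :=
  ∀ e f : G.edgeSet, e ≠ f → (∃ v, v ∈ (e : Sym2 V) ∧ v ∈ (f : Sym2 V)) → c e ≠ c f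

/-- The palette of a vertex: the set of colors on its incident edges. -/
def palette {V : Type*} (G : SimpleGraph V) (c : G.edgeSet → ℕ) (v : V) : Set ℕ :=
  {n | ∃ e : G.edgeSet, v ∈ (e : Sym2 V) ∧ c e = n}

/-- The coloring is interval at `v`: the palette of `v` is a set of consecutive integers. -/
def IntervalAt {V : Type*} (G : SimpleGraph V) (c : G.edgeSet → ℕ) (v : V) : Prop :=
  ∀ a b m : ℕ, a ∈ palette G c v → b ∈ palette G c v → a ≤ m → m ≤ b →
    m ∈ palette G c v

/-!
Colour the edges at each `x ∈ X` with a block of four consecutive colours `4 b(x), …, 4 b(x) + 3`,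
using the first `deg x` of them. This is interval at `x`, and it is proper at a vertex `y ∉ X`
as soon as the neighbours of `y` get pairwise distinct blocks, i.e. as soon as `b` properly
colours the graph joining two vertices with a common neighbour. That graph has maximum degree
at most `Δ(G)²`, so greedily `Δ(G)² + 1` blocks suffice, and `4 (Δ(G)² + 1) ≤ 8 Δ(G)²`.
-/

namespace SimpleGraph

variable {V : Type*} (G : SimpleGraph V)

def commonNeighborGraph : SimpleGraph V where
  Adj v w := v ≠ w ∧ ∃ y, G.Adj v y ∧ G.Adj y w
  symm := ⟨fun _ _ ⟨hne, y, hvy, hyw⟩ => ⟨hne.symm, y, hyw.symm, hvy.symm⟩⟩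
  loopless := ⟨fun _ h => h.1 rfl⟩

variable [Fintype V] [DecidableRel G.Adj]

theorem colorable_of_forall_degree_lt [DecidableEq V] {n : ℕ} (h : ∀ v, G.degree v < n) :
    G.Colorable n := by
  suffices ∀ s : Finset V, ∃ b : V → Fin n, ∀ v ∈ s, ∀ w ∈ s, G.Adj v w → b v ≠ b w by
    obtain ⟨b, hb⟩ := this Finset.univ
    exact ⟨Coloring.mk b fun hvw => hb _ (Finset.mem_univ _) _ (Finset.mem_univ _) hvw⟩
  intro s
  induction s using Finset.induction_on with
  | empty => exact ⟨fun v => ⟨0, (Nat.zero_le _).trans_lt (h v)⟩, by simp⟩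
  | insert a s ha ih =>
    obtain ⟨b, hb⟩ := ih
    obtain ⟨k, -, hk⟩ :
        ∃ k ∈ (Finset.univ : Finset (Fin n)), k ∉ (G.neighborFinset a).image b :=
      Finset.exists_mem_notMem_of_card_lt_card <| by
        simpa using Finset.card_image_le.trans_lt (h a)
    have hk_adj : ∀ w, G.Adj a w → k ≠ b w := fun w haw hkw =>
      hk (Finset.mem_image.2 ⟨w, (G.mem_neighborFinset a w).2 haw, hkw.symm⟩)
    refine ⟨Function.update b a k, ?_⟩
    simp only [Finset.mem_insert]
    rintro v (rfl | hv) w (rfl | hw) hvw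
    · exact absurd hvw (G.loopless.irrefl _)
    · simpa [ne_of_mem_of_not_mem hw ha] using hk_adj w hvw
    · simpa [ne_of_mem_of_not_mem hv ha] using (hk_adj v hvw.symm).symm
    · simpa [ne_of_mem_of_not_mem hv ha, ne_of_mem_of_not_mem hw ha] using hb v hv w hw hvw

section CommonNeighborGraph

variable [DecidableEq V]

instance : DecidableRel G.commonNeighborGraph.Adj := fun _ _ => by
  unfold commonNeighborGraph; infer_instance

theorem degree_commonNeighborGraph_le_sq (v : V) :
    G.commonNeighborGraph.degree v ≤ G.maxDegree ^ 2 := by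
  have hsub : G.commonNeighborGraph.neighborFinset v ⊆
      (G.neighborFinset v).biUnion fun y => G.neighborFinset y := by
    intro w hw
    obtain ⟨-, y, hvy, hyw⟩ := (G.commonNeighborGraph.mem_neighborFinset v w).1 hw
    exact Finset.mem_biUnion.2
      ⟨y, (G.mem_neighborFinset v y).2 hvy, (G.mem_neighborFinset y w).2 hyw⟩
  calc G.commonNeighborGraph.degree v
      ≤ ∑ y ∈ G.neighborFinset v, G.degree y :=
        (Finset.card_le_card hsub).trans Finset.card_biUnion_le
    _ ≤ G.degree v * G.maxDegree :=
        Finset.sum_le_card_nsmul _ _ _ fun y _ => G.degree_le_maxDegree y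
    _ ≤ G.maxDegree ^ 2 := by
        rw [sq]; exact Nat.mul_le_mul_right _ (G.degree_le_maxDegree v)

end CommonNeighborGraph

noncomputable def neighborIndex (x y : V) : ℕ :=
  if h : G.Adj x y then (G.neighborFinset x).equivFin ⟨y, (G.mem_neighborFinset x y).2 h⟩ else 0

variable {G}

theorem neighborIndex_lt {x y : V} (h : G.Adj x y) : G.neighborIndex x y < G.degree x := by
  rw [neighborIndex, dif_pos h]
  exact Fin.isLt _

theorem eq_of_neighborIndex_eq {x y z : V} (hy : G.Adj x y) (hz : G.Adj x z)
    (h : G.neighborIndex x y = G.neighborIndex x z) : y = z := by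
  rw [neighborIndex, neighborIndex, dif_pos hy, dif_pos hz] at h
  exact congrArg Subtype.val ((G.neighborFinset x).equivFin.injective (Fin.ext h))

theorem exists_neighborIndex_eq {x : V} {j : ℕ} (hj : j < G.degree x) :
    ∃ y, G.Adj x y ∧ G.neighborIndex x y = j := by
  obtain ⟨⟨y, hy⟩, hyj⟩ := (G.neighborFinset x).equivFin.surjective ⟨j, hj⟩
  have hxy := (G.mem_neighborFinset x y).1 hy
  exact ⟨y, hxy, by rw [neighborIndex, dif_pos hxy, hyj]⟩

end SimpleGraph

theorem Nat.eq_and_eq_of_mul_add_eq {k a b i j : ℕ} (hi : i < k) (hj : j < k)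
    (h : k * a + i = k * b + j) : a = b ∧ i = j := by
  have hk : 0 < k := by omega
  constructor
  · simpa [Nat.mul_add_div hk, Nat.div_eq_of_lt hi, Nat.div_eq_of_lt hj] using
      congrArg (· / k) h
  · simpa [Nat.mul_add_mod, Nat.mod_eq_of_lt hi, Nat.mod_eq_of_lt hj] using congrArg (· % k) h

section Palette

variable {V : Type*} {G : SimpleGraph V} {X : Set V}

theorem IsBipartition.exists_eq_mk (hX : IsBipartition G X) (e : G.edgeSet) :
    ∃ x ∈ X, ∃ y, ∃ h : G.Adj x y, e = ⟨s(x, y), G.mem_edgeSet.2 h⟩ := by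
  obtain ⟨e, he⟩ := e
  induction e using Sym2.ind with
  | h u v =>
    by_cases hu : u ∈ X
    · exact ⟨u, hu, v, he, rfl⟩
    · exact ⟨v, not_not.1 (mt (hX u v he).2 hu), u, G.adj_symm he, Subtype.ext Sym2.eq_swap⟩

theorem IsBipartition.eq_of_mem_of_mem (hX : IsBipartition G X) {x₁ x₂ y₁ y₂ v : V}
    (hx₁ : x₁ ∈ X) (hx₂ : x₂ ∈ X) (h₁ : G.Adj x₁ y₁) (h₂ : G.Adj x₂ y₂) (hx : x₁ ≠ x₂)
    (hv₁ : v ∈ s(x₁, y₁)) (hv₂ : v ∈ s(x₂, y₂)) : v = y₁ ∧ v = y₂ := by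
  have hy₁ := (hX x₁ y₁ h₁).1 hx₁
  have hy₂ := (hX x₂ y₂ h₂).1 hx₂
  rw [Sym2.mem_iff] at hv₁ hv₂
  by_cases hv : v ∈ X <;> grind

variable {c : G.edgeSet → ℕ}

theorem intervalAt_iff_ordConnected {v : V} :
    IntervalAt G c v ↔ (palette G c v).OrdConnected :=
  ⟨fun h => ⟨fun a ha b hb m hm => h a b m ha hb hm.1 hm.2⟩,
    fun h _ _ _ ha hb ham hmb => h.out ha hb ⟨ham, hmb⟩⟩

theorem palette_eq_range (v : V) :
    palette G c v = Set.range fun y : G.neighborSet v => c ⟨s(v, y), G.mem_edgeSet.2 y.2⟩ := by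
  ext n
  constructor
  · rintro ⟨⟨e, he⟩, hve, rfl⟩
    obtain ⟨y, rfl⟩ := Sym2.mem_iff_exists.1 hve
    exact ⟨⟨y, he⟩, rfl⟩
  · rintro ⟨y, rfl⟩
    exact ⟨_, Sym2.mem_mk_left _ _, rfl⟩

end Palette

open Classical in
/-- Summing over both ends makes the colour symmetric in them; on an edge of a bipartite graph
only the `X`-end contributes. -/
noncomputable def blockColoring {V : Type*} [Fintype V] (G : SimpleGraph V)
    [DecidableRel G.Adj] (X : Set V) (b : V → ℕ) (k : ℕ) (e : G.edgeSet) : ℕ :=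
  Sym2.lift ⟨fun v w => blockColor v w + blockColor w v, fun _ _ => add_comm _ _⟩ e
where
  blockColor (v w : V) : ℕ := if v ∈ X then k * b v + G.neighborIndex v w else 0

section BlockColoring

variable {V : Type*} [Fintype V] {G : SimpleGraph V} [DecidableRel G.Adj] {X : Set V}
  {b : V → ℕ} {k : ℕ}

theorem blockColoring_mk (hX : IsBipartition G X) {x y : V} (hx : x ∈ X) (h : G.Adj x y) :
    blockColoring G X b k ⟨s(x, y), G.mem_edgeSet.2 h⟩ = k * b x + G.neighborIndex x y := by
  simp [blockColoring, blockColoring.blockColor, hx, (hX x y h).1 hx]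

theorem isProperEdgeColoring_blockColoring (hX : IsBipartition G X)
    (hk : ∀ x ∈ X, G.degree x ≤ k) (hb : ∀ v w, G.commonNeighborGraph.Adj v w → b v ≠ b w) :
    IsProperEdgeColoring G (blockColoring G X b k) := by
  rintro e f hef ⟨v, hve, hvf⟩ hc
  obtain ⟨x₁, hx₁, y₁, h₁, rfl⟩ := hX.exists_eq_mk e
  obtain ⟨x₂, hx₂, y₂, h₂, rfl⟩ := hX.exists_eq_mk f
  rw [blockColoring_mk hX hx₁ h₁, blockColoring_mk hX hx₂ h₂] at hc
  obtain ⟨hbx, hi⟩ := Nat.eq_and_eq_of_mul_add_eq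
    ((G.neighborIndex_lt h₁).trans_le (hk x₁ hx₁))
    ((G.neighborIndex_lt h₂).trans_le (hk x₂ hx₂)) hc
  by_cases hx : x₁ = x₂
  · subst hx
    obtain rfl := G.eq_of_neighborIndex_eq h₁ h₂ hi
    exact hef rfl
  · obtain ⟨rfl, rfl⟩ := hX.eq_of_mem_of_mem hx₁ hx₂ h₁ h₂ hx hve hvf
    exact hb x₁ x₂ ⟨hx, _, h₁, G.adj_symm h₂⟩ hbx

theorem blockColoring_lt (hX : IsBipartition G X) (hk : ∀ x ∈ X, G.degree x ≤ k) {n : ℕ}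
    (hbn : ∀ v, b v < n) (e : G.edgeSet) : blockColoring G X b k e < k * n := by
  obtain ⟨x, hx, y, h, rfl⟩ := hX.exists_eq_mk e
  have hi := (G.neighborIndex_lt h).trans_le (hk x hx)
  calc blockColoring G X b k ⟨s(x, y), _⟩ = k * b x + G.neighborIndex x y :=
        blockColoring_mk hX hx h
    _ < k * (b x + 1) := by rw [Nat.mul_succ]; omega
    _ ≤ k * n := Nat.mul_le_mul_left k (hbn x)

theorem palette_blockColoring (hX : IsBipartition G X) {x : V} (hx : x ∈ X) :
    palette G (blockColoring G X b k) x = Set.Ico (k * b x) (k * b x + G.degree x) := by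
  ext m
  simp only [palette_eq_range, Set.mem_range, Subtype.exists, SimpleGraph.mem_neighborSet,
    Set.mem_Ico]
  constructor
  · rintro ⟨y, h, rfl⟩
    have := G.neighborIndex_lt h
    rw [blockColoring_mk hX hx h]
    omega
  · rintro ⟨hlo, hhi⟩
    obtain ⟨y, h, hy⟩ := G.exists_neighborIndex_eq (x := x) (j := m - k * b x) (by omega)
    exact ⟨y, h, by rw [blockColoring_mk hX hx h, hy]; omega⟩

theorem intervalAt_blockColoring (hX : IsBipartition G X) {x : V} (hx : x ∈ X) :
    IntervalAt G (blockColoring G X b k) x := by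
  rw [intervalAt_iff_ordConnected, palette_blockColoring hX hx]
  exact Set.ordConnected_Ico

end BlockColoring

/-- There is a constant `C` such that every bipartite graph `G = (X, Y; E)` with
`Δ(X) ≤ 4` satisfies `χ'_int(G, X) ≤ C * Δ(G)²`: it has an `X`-interval coloring using
at most `C * Δ(G)²` colors. -/
theorem X_interval_quadratic_bound_of_maxDegX_le_four :
    ∃ C : ℕ, ∀ (V : Type) [Fintype V] [DecidableEq V]
      (G : SimpleGraph V) [DecidableRel G.Adj] (X : Set V),
      IsBipartition G X →
      (∀ x ∈ X, G.degree x ≤ 4) →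
      ∃ c : G.edgeSet → ℕ, IsProperEdgeColoring G c ∧
        (∀ e, c e < C * G.maxDegree ^ 2) ∧
        ∀ x ∈ X, IntervalAt G c x := by
  refine ⟨8, fun V _ _ G _ X hX hdeg => ?_⟩
  obtain ⟨b⟩ := G.commonNeighborGraph.colorable_of_forall_degree_lt
    (n := G.maxDegree ^ 2 + 1) fun v => Nat.lt_succ_of_le (G.degree_commonNeighborGraph_le_sq v)
  refine ⟨blockColoring G X (fun v => b v) 4,
    isProperEdgeColoring_blockColoring hX hdeg fun _ _ hvw => Fin.val_injective.ne (b.valid hvw),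
    fun e => ?_, fun x hx => intervalAt_blockColoring hX hx⟩
  obtain ⟨x, -, y, h, -⟩ := hX.exists_eq_mk e
  have hΔ : 1 ≤ G.maxDegree := h.degree_pos_left.trans_le (G.degree_le_maxDegree x)
  calc blockColoring G X (fun v => b v) 4 e < 4 * (G.maxDegree ^ 2 + 1) :=
        blockColoring_lt hX hdeg (fun v => (b v).isLt) e
    _ ≤ 8 * G.maxDegree ^ 2 := by nlinarith
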